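/- arXiv:1806.10459 — 2 statements merged into one kernel-verified Lean document; each statement's English description precedes it below -/
import Mathlib

section
/- Let f be a rational Herglotz–Nevanlinna function with μ < π̊(f) and τ = f(μ), ρ ∈ ℝ, and assume f is not identically equal to τ. Then f̂ := Θ(μ,τ,ρ,f) is again a rational Herglotz–Nevanlinna function, ind f̂ = ind f − 1, and its associated polynomials are given by f̂↑(λ) = (ρ f↑(λ) − (λ − μ + τρ) f↓(λ))/(λ − μ) and f̂↓(λ) = (f↑(λ) − τ f↓(λ))/(λ − μ), both quotients being polynomials. -/
open MeasureTheory Set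

/-- A rational Herglotz–Nevanlinna function
`f(λ) = h₀λ + h + ∑_{k=1}^{d} δ_k/(h_k − λ)` with `h₀ ≥ 0`, `δ_k > 0` and
strictly increasing poles `h₁ < ⋯ < h_d`. -/
structure RHN : Type where
  d : ℕ
  h0 : ℝ
  h : ℝ
  delta : Fin d → ℝ
  pole : Fin d → ℝ
  h0_nonneg : 0 ≤ h0
  delta_pos : ∀ k, 0 < delta k
  pole_strictMono : StrictMono pole

namespace RHN

/-- The value `f(x)`. -/
noncomputable def eval (f : RHN) (x : ℝ) : ℝ :=
  f.h0 * x + f.h + ∑ k, f.delta k / (f.pole k - x)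

/-- The normalizing constant `h₀′`. -/
noncomputable def h0' (f : RHN) : ℝ := if 0 < f.h0 then 1 / f.h0 else 1

/-- The polynomial `f↓(x) = h₀′ ∏ (h_k − x)` (as a function). -/
noncomputable def fdown (f : RHN) (x : ℝ) : ℝ := f.h0' * ∏ k, (f.pole k - x)

/-- The polynomial `f↑ = f ⬝ f↓` (as a function). -/
noncomputable def fup (f : RHN) (x : ℝ) : ℝ :=
  f.h0' * ((f.h0 * x + f.h) * ∏ k, (f.pole k - x)
    + ∑ k, f.delta k * ∏ j ∈ Finset.univ.erase k, (f.pole j - x))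

/-- The index `ind f = deg f↑ + deg f↓`, i.e. `2d+1` if `h₀ > 0` and `2d` if `h₀ = 0`. -/
noncomputable def index (f : RHN) : ℤ := 2 * f.d + (if 0 < f.h0 then 1 else 0)

/-- The smallest pole `π̊(f)` (equal to `+∞` when `f` has no poles). -/
noncomputable def mpole (f : RHN) : EReal :=
  if hd : 0 < f.d then ((f.pole ⟨0, hd⟩ : ℝ) : EReal) else (⊤ : EReal)

/-- `f` is a constant function (class `𝓡₀`). -/
def IsConst (f : RHN) : Prop := f.d = 0 ∧ f.h0 = 0

/-- The function `f + a`. -/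
def addConst (f : RHN) (a : ℝ) : RHN := { f with h := f.h + a }

/-- `Π_f(x)`: the number of poles of `f` not exceeding `x`. -/
noncomputable def poleCount (f : RHN) (x : ℝ) : ℕ := Nat.card {k : Fin f.d // f.pole k ≤ x}

end RHN

/-- A boundary coefficient: a rational Herglotz–Nevanlinna function, or `none` = `∞`
(the Dirichlet case). -/
abbrev BC := Option RHN

namespace BC

noncomputable def fup : BC → ℝ → ℝ
  | none => fun _ => -1
  | some f => f.fup

noncomputable def fdown : BC → ℝ → ℝ
  | none => fun _ => 0
  | some f => f.fdown

noncomputable def index : BC → ℤ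
  | none => -1
  | some f => f.index

noncomputable def mpole : BC → EReal
  | none => (⊤ : EReal)
  | some f => f.mpole

noncomputable def poleCount : BC → ℝ → ℕ
  | none => fun _ => 0
  | some f => f.poleCount

end BC

/-- `f↑′(x)f↓(x) − f↑(x)f↓′(x)`, the expression appearing in the norming constants
(it equals `f′(x)f↓²(x)` away from the poles). -/
noncomputable def wronskLike (f : BC) (x : ℝ) : ℝ :=
  deriv (BC.fup f) x * BC.fdown f x - BC.fup f x * deriv (BC.fdown f) x

/-- `s` is real-valued, belongs to `L²(0,π)` and has zero mean. -/
def AdmissibleS (s : ℝ → ℝ) : Prop :=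
  MemLp s 2 (volume.restrict (Set.Icc 0 Real.pi)) ∧ (∫ x in (0:ℝ)..Real.pi, s x) = 0

/-- `(y, w)` is a solution of `−(y^{[1]})′ − s y^{[1]} − s² y = λ y` on `[0,π]`, where
`w = y^{[1]} = y′ − s y` is the quasi-derivative; both `y` and `w` are absolutely
continuous, being integrals of integrable functions. -/
def IsSolution (s : ℝ → ℝ) (lam : ℝ) (y w : ℝ → ℝ) : Prop :=
  IntegrableOn (fun t => w t + s t * y t) (Set.Icc 0 Real.pi) ∧
  IntegrableOn (fun t => -(s t) * w t - (s t) ^ 2 * y t - lam * y t) (Set.Icc 0 Real.pi) ∧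
  (∀ x ∈ Set.Icc 0 Real.pi, y x = y 0 + ∫ t in (0:ℝ)..x, (w t + s t * y t)) ∧
  (∀ x ∈ Set.Icc 0 Real.pi,
    w x = w 0 + ∫ t in (0:ℝ)..x, (-(s t) * w t - (s t) ^ 2 * y t - lam * y t))

/-- `lam` is an eigenvalue of the boundary value problem `𝒫(s,f,F)`. -/
def IsEigenvalue (s : ℝ → ℝ) (f F : BC) (lam : ℝ) : Prop :=
  ∃ y w : ℝ → ℝ, IsSolution s lam y w ∧ (y 0 ≠ 0 ∨ w 0 ≠ 0) ∧
    BC.fdown f lam * w 0 + BC.fup f lam * y 0 = 0 ∧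
    BC.fup F lam * y Real.pi - BC.fdown F lam * w Real.pi = 0

/-- `lam 0 < lam 1 < ⋯` is the increasing enumeration of all eigenvalues of `𝒫(s,f,F)`. -/
def IsSpectrum (s : ℝ → ℝ) (f F : BC) (lam : ℕ → ℝ) : Prop :=
  StrictMono lam ∧ ∀ x : ℝ, IsEigenvalue s f F x ↔ ∃ n, lam n = x

/-- `gam` is the norming constant of `𝒫(s,f,F)` corresponding to the eigenvalue `lam`:
`γ = ∫₀^π φ² + (f↑′f↓ − f↑f↓′)(λ) + (1/β²)(F↑′F↓ − F↑F↓′)(λ)` where `φ` is the solution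
with `φ(0) = f↓(λ)`, `φ^{[1]}(0) = −f↑(λ)`, `ψ` the solution with `ψ(π) = F↓(λ)`,
`ψ^{[1]}(π) = F↑(λ)`, and `ψ = βφ`. -/
def IsNormingConstant (s : ℝ → ℝ) (f F : BC) (lam gam : ℝ) : Prop :=
  ∃ y w Y W : ℝ → ℝ, ∃ b : ℝ,
    IsSolution s lam y w ∧ y 0 = BC.fdown f lam ∧ w 0 = -(BC.fup f lam) ∧
    IsSolution s lam Y W ∧ Y Real.pi = BC.fdown F lam ∧ W Real.pi = BC.fup F lam ∧
    b ≠ 0 ∧ (∀ x ∈ Set.Icc 0 Real.pi, Y x = b * y x) ∧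
    gam = (∫ x in (0:ℝ)..Real.pi, (y x) ^ 2) + wronskLike f lam + (1 / b ^ 2) * wronskLike F lam

/-- `{lam n, gam n}` is the spectral data of `𝒫(s,f,F)`. -/
def IsSpectralData (s : ℝ → ℝ) (f F : BC) (lam gam : ℕ → ℝ) : Prop :=
  IsSpectrum s f F lam ∧ ∀ n, IsNormingConstant s f F (lam n) (gam n)

/-- `g = Θ(μ,τ,ρ,f)`, i.e. `g(λ) = (μ − λ)/(f(λ) − τ) + ρ`, with the conventions
`Θ(μ,τ,ρ,f) = ∞` if `f ≡ τ` and `Θ(μ,τ,ρ,∞) = ρ`. -/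
def IsTheta (mu tau rho : ℝ) : BC → BC → Prop
  | none, some g => g.d = 0 ∧ g.h0 = 0 ∧ g.h = rho
  | none, none => False
  | some f, none => ∀ x, f.eval x = tau
  | some f, some g => (¬ ∀ x, f.eval x = tau) ∧
      ∀ x, f.fdown x ≠ 0 → f.eval x ≠ tau → g.fdown x ≠ 0 →
        g.eval x = (mu - x) / (f.eval x - tau) + rho

/-- The common part of the transformations `T̂` and `T̃`: given the factorizing solution
`(v, w)` (with `w = v^{[1]}`) of the original equation at the value `Λ`, the transformed
potential is `st = s − 2v′/v + (2/π)ln(v(π)/v(0)) = −s − 2w/v + (2/π)ln(v(π)/v(0))`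
(a.e. on `[0,π]`) and the transformed boundary coefficients are the indicated
`Θ`-transforms of `f` and `F`. -/
def TransfCore (s : ℝ → ℝ) (f F : BC) (Lam : ℝ) (v w : ℝ → ℝ)
    (st : ℝ → ℝ) (ft Ft : BC) : Prop :=
  (∀ x ∈ Set.Icc 0 Real.pi, v x ≠ 0) ∧
  (∀ᵐ x ∂(volume : Measure ℝ), x ∈ Set.Icc 0 Real.pi →
    st x = -(s x) - 2 * w x / v x + (2 / Real.pi) * Real.log (v Real.pi / v 0)) ∧
  IsTheta Lam (-(w 0) / v 0) (-(w 0) / v 0 + (2 / Real.pi) * Real.log (v Real.pi / v 0)) f ft ∧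
  IsTheta Lam (w Real.pi / v Real.pi)
    (w Real.pi / v Real.pi - (2 / Real.pi) * Real.log (v Real.pi / v 0)) F Ft

/-- The shift `Λ` used in the transformation `T̂`: `Λ = λ₀` if `f, F ≠ ∞` and
`Λ = λ₀ − 2` otherwise. -/
def hatLam (f F : BC) (lam0 : ℝ) : ℝ := if f.isSome && F.isSome then lam0 else lam0 - 2

/-- `(st, ft, Ft) = T̂(s, f, F)`, where `lam0` is the smallest eigenvalue of `𝒫(s,f,F)`;
the factorizing solution is `v = φ(·,Λ)` if `f ≠ ∞` and `v = ψ(·,Λ)` if `f = ∞`. -/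
def IsHatT (s : ℝ → ℝ) (f F : BC) (lam0 : ℝ) (st : ℝ → ℝ) (ft Ft : BC) : Prop :=
  ∃ v w : ℝ → ℝ,
    IsSolution s (hatLam f F lam0) v w ∧
    (if f.isSome then
        v 0 = BC.fdown f (hatLam f F lam0) ∧ w 0 = -(BC.fup f (hatLam f F lam0))
      else
        v Real.pi = BC.fdown F (hatLam f F lam0) ∧ w Real.pi = BC.fup F (hatLam f F lam0)) ∧
    TransfCore s f F (hatLam f F lam0) v w st ft Ft

/-- `(st, ft, Ft) = T̃(μ, ν, s, f, F)`, where `lam0 = λ̊(s,f,F)` and `gam0 = γ̊(s,f,F)`;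
the three disjuncts correspond to the three pieces `S̃₁`, `S̃₂`, `S̃₃` of the domain `S̃`. -/
def IsTildeT (mu nu : ℝ) (s : ℝ → ℝ) (f F : BC) (lam0 gam0 : ℝ)
    (st : ℝ → ℝ) (ft Ft : BC) : Prop :=
  (mu < lam0 ∧ 0 < nu ∧
    ∃ Cy Cw Sy Sw : ℝ → ℝ, ∃ kap rho : ℝ,
      IsSolution s mu Cy Cw ∧ Cy 0 = 1 ∧ Cw 0 = 0 ∧
      IsSolution s mu Sy Sw ∧ Sy 0 = 0 ∧ Sw 0 = 1 ∧
      BC.fup F mu * Sy Real.pi - BC.fdown F mu * Sw Real.pi ≠ 0 ∧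
      kap = (BC.fup F mu * Cy Real.pi - BC.fdown F mu * Cw Real.pi) /
            (BC.fup F mu * Sy Real.pi - BC.fdown F mu * Sw Real.pi) ∧
      nu + BC.fdown f mu * (kap * BC.fdown f mu - BC.fup f mu) ≠ 0 ∧
      rho = (nu * kap + BC.fup f mu * (kap * BC.fdown f mu - BC.fup f mu)) /
            (nu + BC.fdown f mu * (kap * BC.fdown f mu - BC.fup f mu)) ∧
      TransfCore s f F mu (fun x => Cy x - rho * Sy x) (fun x => Cw x - rho * Sw x) st ft Ft) ∨
  ((∃ f' : RHN, f = some f' ∧ f'.IsConst) ∧ mu = lam0 ∧ nu = gam0 / 2 ∧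
    ∃ v w : ℝ → ℝ, IsSolution s (mu - 2) v w ∧
      v 0 = BC.fdown f (mu - 2) ∧ w 0 = -(BC.fup f (mu - 2)) ∧
      TransfCore s f F (mu - 2) v w st ft Ft) ∨
  ((∃ F' : RHN, F = some F' ∧ F'.IsConst) ∧ mu = lam0 ∧ nu = 2 * gam0 ∧
    ∃ v w : ℝ → ℝ, IsSolution s (mu - 2) v w ∧
      v Real.pi = BC.fdown F (mu - 2) ∧ w Real.pi = BC.fup F (mu - 2) ∧
      TransfCore s f F (mu - 2) v w st ft Ft)

/-!
The numerator `P = f↑ - τ f↓` of `f - τ` vanishes at `μ`, because `τ = f(μ)`, and its value at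
the `k`-th pole `h_k` (counting from `k = 0`) is `f↑(h_k)`, of sign `(-1)^k`. So `P` has a root
in every gap between consecutive poles, and one more beyond the last pole when `h₀ > 0` (then
`deg P = d + 1` and the leading coefficient of `P` has sign `(-1)^d`). Together with `μ` these
are all the roots of `P`, so `f̂↓ = P / (λ - μ)` has simple real zeros `ζ_k`, and
`f̂↑ = ρ f̂↓ - f↓`. Exactly `k + 1` poles of `f` lie below `ζ_k`, so `-f↓(ζ_k)` has sign
`(-1)^k`, which is what makes the residues of the partial fraction expansion of `f̂↑ / f̂↓`
positive. The new function has `d` poles and `h₀ = 0` if `h₀(f) > 0`, and `d - 1` poles and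
`h₀ = 1/(τ - h)` if `h₀(f) = 0`: in both cases the index drops by one.
-/

open Polynomial Finset Filter

lemma neg_one_pow_card_filter_neg_mul_prod_pos {ι : Type*} (s : Finset ι) (g : ι → ℝ)
    (hg : ∀ j ∈ s, g j ≠ 0) : 0 < (-1) ^ #{j ∈ s | g j < 0} * ∏ j ∈ s, g j := by
  classical
  rw [← prod_filter_mul_prod_filter_not s (fun j => g j < 0), ← mul_assoc, ← prod_neg]
  refine mul_pos (prod_pos fun j hj => ?_) (prod_pos fun j hj => ?_)
  · exact neg_pos.2 (mem_filter.1 hj).2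
  · obtain ⟨hjs, hj⟩ := mem_filter.1 hj
    exact lt_of_le_of_ne (not_lt.1 hj) (hg j hjs).symm

lemma neg_one_pow_mul_prod_erase_sub_pos {n : ℕ} {a : Fin n → ℝ} (ha : StrictMono a)
    (k : Fin n) : 0 < (-1) ^ (k : ℕ) * ∏ j ∈ univ.erase k, (a j - a k) := by
  have hcard : #{j ∈ univ.erase k | a j - a k < 0} = k := by
    rw [← Fin.card_Iio k]
    congr 1
    ext j
    simp only [mem_filter, mem_erase, sub_neg, ha.lt_iff_lt, Finset.mem_Iio]
    exact ⟨fun h => h.2, fun h => ⟨⟨h.ne, mem_univ j⟩, h⟩⟩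
  have h := neg_one_pow_card_filter_neg_mul_prod_pos (univ.erase k) (fun j => a j - a k)
    fun j hj => sub_ne_zero.2 (ha.injective.ne (mem_erase.1 hj).1)
  rwa [hcard] at h

lemma neg_one_pow_mul_prod_sub_pos {n : ℕ} {a : Fin n → ℝ} {x : ℝ} (k : Fin n)
    (hlt : ∀ j, j ≤ k → a j < x) (hgt : ∀ j, k < j → x < a j) :
    0 < (-1) ^ ((k : ℕ) + 1) * ∏ j, (a j - x) := by
  have hcard : #{j | a j - x < 0} = k + 1 := by
    rw [← Fin.card_Iic k]
    congr 1
    ext j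
    simp only [mem_filter_univ, sub_neg, Finset.mem_Iic]
    exact ⟨fun h => not_lt.1 fun hkj => (hgt j hkj).not_gt h, hlt j⟩
  have h := neg_one_pow_card_filter_neg_mul_prod_pos univ (fun j => a j - x) fun j _ => by
    rcases le_or_gt j k with h | h
    exacts [(sub_neg.2 (hlt j h)).ne, (sub_pos.2 (hgt j h)).ne']
  rwa [hcard] at h

lemma mul_neg_of_neg_one_pow_mul_pos {m : ℕ} {x y : ℝ} (hx : 0 < (-1) ^ m * x)
    (hy : 0 < (-1) ^ (m + 1) * y) : x * y < 0 := by
  have h : ((-1 : ℝ) ^ m) ^ 2 = 1 := by rw [← pow_mul, pow_mul', neg_one_sq, one_pow]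
  rw [pow_succ] at hy
  nlinarith [mul_pos hx hy]

lemma prod_C_sub_X {ι : Type*} (s : Finset ι) (a : ι → ℝ) :
    ∏ k ∈ s, (C (a k) - X) = C ((-1) ^ #s) * ∏ k ∈ s, (X - C (a k)) := by
  simp_rw [← neg_sub X, prod_neg, C_pow, C_neg, C_1]

lemma natDegree_prod_C_sub_X {ι : Type*} (s : Finset ι) (a : ι → ℝ) :
    (∏ k ∈ s, (C (a k) - X)).natDegree = #s := by
  rw [prod_C_sub_X, natDegree_C_mul (pow_ne_zero _ (neg_ne_zero.2 one_ne_zero)),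
    natDegree_prod_of_monic _ _ fun k _ => monic_X_sub_C (a k)]
  simp

lemma coeff_prod_C_sub_X_card {ι : Type*} (s : Finset ι) (a : ι → ℝ) :
    (∏ k ∈ s, (C (a k) - X)).coeff #s = (-1) ^ #s := by
  conv_lhs => rw [← natDegree_prod_C_sub_X s a]
  rw [coeff_natDegree, prod_C_sub_X, leadingCoeff_mul,
    leadingCoeff_C, (monic_prod_of_monic _ _ fun k _ => monic_X_sub_C (a k)).leadingCoeff,
    mul_one]

lemma eq_C_mul_prod_C_sub_X_of_eval_eq_zero {n : ℕ} {p : ℝ[X]} (hp : p.natDegree ≤ n)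
    {ζ : Fin n → ℝ} (hζ : Function.Injective ζ) (hroot : ∀ k, p.eval (ζ k) = 0) :
    p = C ((-1) ^ n * p.coeff n) * ∏ k, (C (ζ k) - X) := by
  have hdeg := natDegree_prod_C_sub_X (univ : Finset (Fin n)) ζ
  have hcoeff := coeff_prod_C_sub_X_card (univ : Finset (Fin n)) ζ
  rw [card_univ, Fintype.card_fin] at hdeg hcoeff
  refine eq_of_degree_sub_lt_of_eval_finset_eq (univ.image ζ) ?_ fun x hx => ?_
  · rw [card_image_of_injective _ hζ, card_univ, Fintype.card_fin, degree_lt_iff_coeff_zero]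
    intro m hm
    rcases hm.eq_or_lt with rfl | hm
    · have h1 : ((-1 : ℝ) ^ n * (-1) ^ n) = 1 := by rw [← mul_pow]; norm_num
      rw [coeff_sub, coeff_C_mul, hcoeff]
      linear_combination (-p.coeff n) * h1
    · refine coeff_eq_zero_of_natDegree_lt (lt_of_le_of_lt ?_ hm)
      exact (natDegree_sub_le _ _).trans (max_le hp ((natDegree_C_mul_le _ _).trans hdeg.le))
  · obtain ⟨k, -, rfl⟩ := mem_image.1 hx
    simp [hroot k, eval_prod, prod_eq_zero (mem_univ k)]

lemma exists_mem_Ioo_eq_zero_of_mul_neg {g : ℝ → ℝ} {a b : ℝ} (hab : a < b)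
    (hg : ContinuousOn g (Icc a b)) (hsign : g a * g b < 0) : ∃ z ∈ Ioo a b, g z = 0 := by
  rcases lt_or_gt_of_ne (left_ne_zero_of_mul hsign.ne) with ha | ha
  · exact intermediate_value_Ioo hab.le hg ⟨ha, pos_of_mul_neg_right hsign ha.le⟩
  · exact intermediate_value_Ioo' hab.le hg ⟨neg_of_mul_neg_right hsign ha.le, ha⟩

lemma exists_strictMono_roots_of_alternating {n : ℕ} (p : ℝ[X]) {a : Fin (n + 1) → ℝ}
    (ha : StrictMono a) (hsign : ∀ k : Fin (n + 1), 0 < (-1) ^ (k : ℕ) * p.eval (a k)) :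
    ∃ ζ : Fin n → ℝ, StrictMono ζ ∧ (∀ k, ζ k ∈ Ioo (a k.castSucc) (a k.succ)) ∧
      ∀ k, p.eval (ζ k) = 0 := by
  have hroot (k : Fin n) : ∃ z ∈ Ioo (a k.castSucc) (a k.succ), p.eval z = 0 :=
    exists_mem_Ioo_eq_zero_of_mul_neg (ha k.castSucc_lt_succ) p.continuous.continuousOn
      (mul_neg_of_neg_one_pow_mul_pos (hsign k.castSucc) (by simpa using hsign k.succ))
  choose ζ hζ hζp using hroot
  refine ⟨ζ, fun k l hkl => (hζ k).2.trans_le ?_ |>.trans (hζ l).1, hζ, hζp⟩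
  exact ha.monotone (Fin.succ_le_castSucc_iff.2 hkl)

lemma eval_eq_mul_prod_of_alternating {n : ℕ} {p : ℝ[X]} (hp : p.natDegree ≤ n + 1) {mu : ℝ}
    (hmu : p.eval mu = 0) {a : Fin (n + 1) → ℝ} (ha : StrictMono a) (hmua : mu < a 0)
    (hsign : ∀ k : Fin (n + 1), 0 < (-1) ^ (k : ℕ) * p.eval (a k)) :
    ∃ ζ : Fin n → ℝ, StrictMono ζ ∧ (∀ k, ζ k ∈ Ioo (a k.castSucc) (a k.succ)) ∧
      ∀ x, p.eval x = (x - mu) * ((-1) ^ n * p.coeff (n + 1) * ∏ k, (ζ k - x)) := by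
  obtain ⟨ζ, hζ, hζa, hζp⟩ := exists_strictMono_roots_of_alternating p ha hsign
  have hmuζ (k : Fin n) : mu < ζ k := hmua.trans_le (ha.monotone (Fin.zero_le _)) |>.trans (hζa k).1
  have hcons : StrictMono (Fin.cons mu ζ : Fin (n + 1) → ℝ) := Fin.strictMono_cons.2 ⟨hmuζ, hζ⟩
  refine ⟨ζ, hζ, hζa, fun x => ?_⟩
  have hfac := eq_C_mul_prod_C_sub_X_of_eval_eq_zero hp hcons.injective
    (Fin.cases hmu hζp)
  rw [congrArg (eval x) hfac]
  simp [Fin.prod_univ_succ, eval_prod, pow_succ]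
  ring

lemma eventually_pos_leadingCoeff_mul_eval {p : ℝ[X]} (hp : 0 < p.degree) :
    ∀ᶠ x in atTop, 0 < p.leadingCoeff * p.eval x := by
  have hlc : p.leadingCoeff ≠ 0 := leadingCoeff_ne_zero.2 (ne_zero_of_degree_gt hp)
  have htendsto := tendsto_atTop_of_leadingCoeff_nonneg (C p.leadingCoeff * p)
    (by rwa [degree_C_mul hlc]) (by rw [leadingCoeff_mul, leadingCoeff_C]; exact mul_self_nonneg _)
  exact (htendsto.eventually_gt_atTop 0).mono fun x hx => by simpa using hx

/-- `∑ c_k / (b_k - X) = residueNumerator b c / ∏ (b_k - X)`. -/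
noncomputable def residueNumerator {n : ℕ} (b c : Fin n → ℝ) : ℝ[X] :=
  ∑ k, C (c k) * ∏ j ∈ univ.erase k, (C (b j) - X)

lemma eval_residueNumerator {n : ℕ} (b c : Fin n → ℝ) (x : ℝ) :
    (residueNumerator b c).eval x = ∑ k, c k * ∏ j ∈ univ.erase k, (b j - x) := by
  simp [residueNumerator, eval_finsetSum, eval_prod]

lemma eval_residueNumerator_apply {n : ℕ} (b c : Fin n → ℝ) (k : Fin n) :
    (residueNumerator b c).eval (b k) = c k * ∏ j ∈ univ.erase k, (b j - b k) := by
  rw [eval_residueNumerator, sum_eq_single k (fun i _ hik => ?_) (by simp)]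
  rw [prod_eq_zero (mem_erase.2 ⟨hik.symm, mem_univ k⟩) (sub_self _), mul_zero]

lemma coeff_residueNumerator_of_le {n : ℕ} (b c : Fin n → ℝ) {m : ℕ} (hm : n ≤ m) :
    (residueNumerator b c).coeff m = 0 := by
  rw [residueNumerator, finsetSum_coeff]
  refine sum_eq_zero fun k _ => ?_
  rw [coeff_C_mul, coeff_eq_zero_of_natDegree_lt, mul_zero]
  rw [natDegree_prod_C_sub_X, card_erase_of_mem (mem_univ k), card_univ, Fintype.card_fin]
  have := k.pos
  omega

namespace RHN

/-- The constant `h₀′` of a function with `h₀ = c`. -/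
noncomputable def normalizer (c : ℝ) : ℝ := if 0 < c then 1 / c else 1

lemma normalizer_pos (c : ℝ) : 0 < normalizer c := by
  unfold normalizer
  split_ifs with hc
  exacts [one_div_pos.2 hc, one_pos]

lemma h0'_pos (f : RHN) : 0 < f.h0' := normalizer_pos f.h0

noncomputable def downPoly (f : RHN) : ℝ[X] := C f.h0' * ∏ k, (C (f.pole k) - X)

noncomputable def upPoly (f : RHN) : ℝ[X] :=
  C f.h0' * ((C f.h0 * X + C f.h) * ∏ k, (C (f.pole k) - X) + residueNumerator f.pole f.delta)

variable (f : RHN)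

lemma eval_downPoly (x : ℝ) : f.downPoly.eval x = f.fdown x := by
  simp [downPoly, fdown, eval_prod]

lemma eval_upPoly (x : ℝ) : f.upPoly.eval x = f.fup x := by
  simp [upPoly, fup, eval_prod, eval_residueNumerator]

lemma natDegree_prod_pole : (∏ k, (C (f.pole k) - X)).natDegree = f.d := by
  simp [natDegree_prod_C_sub_X]

lemma coeff_prod_pole : (∏ k, (C (f.pole k) - X)).coeff f.d = (-1) ^ f.d := by
  simpa using coeff_prod_C_sub_X_card univ f.pole

lemma natDegree_downPoly : f.downPoly.natDegree = f.d := by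
  rw [downPoly, natDegree_C_mul f.h0'_pos.ne', natDegree_prod_pole]

lemma coeff_downPoly : f.downPoly.coeff f.d = f.h0' * (-1) ^ f.d := by
  rw [downPoly, coeff_C_mul, coeff_prod_pole]

lemma natDegree_upPoly_le : f.upPoly.natDegree ≤ f.d + 1 := by
  have hlin : ((C f.h0 * X + C f.h) * ∏ k, (C (f.pole k) - X)).natDegree ≤ f.d + 1 := by
    rw [add_comm f.d]
    exact natDegree_mul_le_of_le natDegree_linear_le (natDegree_prod_pole f).le
  have hres : (residueNumerator f.pole f.delta).natDegree ≤ f.d + 1 :=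
    natDegree_le_iff_coeff_eq_zero.2 fun m hm => coeff_residueNumerator_of_le _ _ (by omega)
  exact (natDegree_C_mul_le _ _).trans (natDegree_add_le_of_degree_le hlin hres)

lemma coeff_upPoly_succ : f.upPoly.coeff (f.d + 1) = f.h0' * f.h0 * (-1) ^ f.d := by
  rw [upPoly, coeff_C_mul, coeff_add, coeff_residueNumerator_of_le _ _ (Nat.le_succ _), add_zero,
    add_comm f.d, coeff_mul_add_eq_of_natDegree_le natDegree_linear_le (natDegree_prod_pole f).le,
    coeff_prod_pole]
  simp [mul_assoc]

lemma coeff_upPoly_of_h0_eq_zero (h : f.h0 = 0) :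
    f.upPoly.coeff f.d = f.h0' * f.h * (-1) ^ f.d := by
  rw [upPoly, coeff_C_mul, coeff_add, coeff_residueNumerator_of_le _ _ le_rfl, h]
  simp [coeff_C_mul, coeff_prod_pole, mul_assoc]

lemma fdown_ne_zero_iff (x : ℝ) : f.fdown x ≠ 0 ↔ ∀ k, f.pole k ≠ x := by
  simp [fdown, f.h0'_pos.ne', prod_eq_zero_iff, sub_eq_zero]

lemma eval_mul_fdown {x : ℝ} (hx : ∀ k, f.pole k ≠ x) : f.eval x * f.fdown x = f.fup x := by
  have hsum : (∑ k, f.delta k / (f.pole k - x)) * ∏ k, (f.pole k - x)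
      = ∑ k, f.delta k * ∏ j ∈ univ.erase k, (f.pole j - x) := by
    rw [sum_mul]
    refine sum_congr rfl fun k _ => ?_
    rw [← mul_prod_erase _ _ (mem_univ k)]
    field_simp [sub_ne_zero.2 (hx k)]
  rw [eval, fdown, fup, ← hsum]
  ring

lemma fup_pole (k : Fin f.d) :
    f.fup (f.pole k) = f.h0' * (f.delta k * ∏ j ∈ univ.erase k, (f.pole j - f.pole k)) := by
  simp [← eval_upPoly, upPoly, eval_residueNumerator_apply, eval_prod, prod_eq_zero (mem_univ k)]

lemma neg_one_pow_mul_fdown_pos {x : ℝ} (k : Fin f.d) (hk : f.pole k < x)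
    (hgt : ∀ j, k < j → x < f.pole j) : 0 < (-1) ^ ((k : ℕ) + 1) * f.fdown x := by
  have := neg_one_pow_mul_prod_sub_pos k
    (fun j hj => (f.pole_strictMono.monotone hj).trans_lt hk) hgt
  rw [fdown, mul_left_comm]
  exact mul_pos f.h0'_pos this

lemma lt_pole_of_coe_lt_mpole {x : ℝ} (hx : (x : EReal) < f.mpole) (k : Fin f.d) :
    x < f.pole k := by
  rw [mpole, dif_pos k.pos, EReal.coe_lt_coe_iff] at hx
  exact hx.trans_le (f.pole_strictMono.monotone (Nat.zero_le k.val))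

lemma d_pos_of_h0_eq_zero (h0 : f.h0 = 0) {x y : ℝ} (hxy : f.eval x ≠ f.eval y) : 0 < f.d := by
  refine Nat.pos_of_ne_zero fun hd => hxy ?_
  have : IsEmpty (Fin f.d) := by rw [hd]; infer_instance
  simp [eval, h0]

lemma h_lt_eval_of_h0_eq_zero (h0 : f.h0 = 0) (hd : 0 < f.d) {x : ℝ}
    (hx : ∀ k, x < f.pole k) : f.h < f.eval x := by
  have hsum : 0 < ∑ k, f.delta k / (f.pole k - x) :=
    sum_pos (fun k _ => div_pos (f.delta_pos k) (sub_pos.2 (hx k))) ⟨⟨0, hd⟩, mem_univ _⟩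
  rw [eval, h0]
  linarith

/-- The polynomial `(f - τ)↑ = f↑ - τ f↓`. -/
noncomputable def upPolySubConst (tau : ℝ) : ℝ[X] := f.upPoly - C tau * f.downPoly

variable {f} in
lemma eval_upPolySubConst (tau x : ℝ) :
    (f.upPolySubConst tau).eval x = f.fup x - tau * f.fdown x := by
  simp [upPolySubConst, eval_upPoly, eval_downPoly]

lemma eval_upPolySubConst_eq_zero {mu tau : ℝ} (hmu : ∀ k, mu < f.pole k)
    (htau : tau = f.eval mu) : (f.upPolySubConst tau).eval mu = 0 := by
  rw [eval_upPolySubConst, htau, ← f.eval_mul_fdown fun k => (hmu k).ne', sub_self]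

lemma natDegree_upPolySubConst_le (tau : ℝ) : (f.upPolySubConst tau).natDegree ≤ f.d + 1 := by
  refine (natDegree_sub_le _ _).trans (max_le f.natDegree_upPoly_le ?_)
  exact (natDegree_C_mul_le _ _).trans (by rw [natDegree_downPoly]; omega)

lemma coeff_upPolySubConst_succ (tau : ℝ) :
    (f.upPolySubConst tau).coeff (f.d + 1) = f.h0' * f.h0 * (-1) ^ f.d := by
  rw [upPolySubConst, coeff_sub, coeff_C_mul, coeff_upPoly_succ,
    coeff_eq_zero_of_natDegree_lt (by rw [natDegree_downPoly]; omega), mul_zero, sub_zero]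

lemma coeff_upPolySubConst_of_h0_eq_zero (tau : ℝ) (h0 : f.h0 = 0) :
    (f.upPolySubConst tau).coeff f.d = (f.h - tau) * (-1) ^ f.d := by
  rw [upPolySubConst, coeff_sub, coeff_C_mul, coeff_upPoly_of_h0_eq_zero f h0, coeff_downPoly,
    h0', if_neg (by rw [h0]; exact lt_irrefl 0)]
  ring

lemma neg_one_pow_mul_eval_pole_pos (tau : ℝ) (k : Fin f.d) :
    0 < (-1) ^ (k : ℕ) * (f.upPolySubConst tau).eval (f.pole k) := by
  have hfdown : f.fdown (f.pole k) = 0 := not_not.1 fun h => (f.fdown_ne_zero_iff _).1 h k rfl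
  rw [eval_upPolySubConst, hfdown, mul_zero, sub_zero, fup_pole, mul_left_comm,
    mul_left_comm _ (f.delta k)]
  exact mul_pos f.h0'_pos (mul_pos (f.delta_pos k)
    (neg_one_pow_mul_prod_erase_sub_pos f.pole_strictMono k))

lemma exists_fup_eq_eval {n : ℕ} {ζ : Fin n → ℝ} (hζ : StrictMono ζ) {c : ℝ} (hc : 0 ≤ c)
    {R : ℝ[X]} (hR : R.natDegree ≤ n + 1) (hRn : R.coeff (n + 1) = normalizer c * c * (-1) ^ n)
    (hsign : ∀ k : Fin n, 0 < (-1) ^ (k : ℕ) * R.eval (ζ k)) :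
    ∃ g : RHN, g.d = n ∧ g.h0 = c ∧ (∀ x, g.fdown x = normalizer c * ∏ k, (ζ k - x)) ∧
      ∀ x, g.fup x = R.eval x := by
  set e := normalizer c
  have he : 0 < e := normalizer_pos c
  set δ : Fin n → ℝ := fun k => R.eval (ζ k) / (e * ∏ j ∈ univ.erase k, (ζ j - ζ k))
  have hδ (k : Fin n) : 0 < δ k := by
    have hden := mul_pos he (neg_one_pow_mul_prod_erase_sub_pos hζ k)
    rw [mul_left_comm] at hden
    have h := div_pos (hsign k) hden
    rwa [mul_div_mul_left _ _ (pow_ne_zero _ (by norm_num : (-1 : ℝ) ≠ 0))] at h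
  set Q : ℝ[X] := ∏ k, (C (ζ k) - X)
  have hQ : Q.natDegree = n := by simp [Q, natDegree_prod_C_sub_X]
  have hQn : Q.coeff n = (-1) ^ n := by simpa using coeff_prod_C_sub_X_card univ ζ
  -- `R₁` has degree `≤ n` and vanishes at every `ζ k`, so it is a multiple of `Q`: this fixes `h`.
  set R₁ := R - C e * (C c * X * Q + residueNumerator ζ δ)
  have hR₁ : R₁.natDegree ≤ n := by
    refine natDegree_le_iff_coeff_eq_zero.2 fun m hm => ?_
    obtain ⟨m, rfl⟩ := Nat.exists_eq_add_of_lt hm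
    rw [coeff_sub, coeff_C_mul, coeff_add, mul_assoc, coeff_C_mul, coeff_X_mul,
      coeff_residueNumerator_of_le _ _ (by omega)]
    rcases m.eq_zero_or_pos with rfl | hm
    · rw [add_zero, hRn, hQn]
      ring
    · rw [coeff_eq_zero_of_natDegree_lt (by omega), coeff_eq_zero_of_natDegree_lt (by omega)]
      ring
  have hroot (k : Fin n) : R₁.eval (ζ k) = 0 := by
    have hprod : ∏ j ∈ univ.erase k, (ζ j - ζ k) ≠ 0 :=
      right_ne_zero_of_mul (neg_one_pow_mul_prod_erase_sub_pos hζ k).ne'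
    have hQk : Q.eval (ζ k) = 0 := by simp [Q, eval_prod, prod_eq_zero (mem_univ k)]
    simp only [R₁, eval_sub, eval_mul, eval_add, eval_C, eval_X, eval_residueNumerator_apply, hQk, δ]
    field_simp
    ring
  have hfac := eq_C_mul_prod_C_sub_X_of_eval_eq_zero hR₁ hζ.injective hroot
  refine ⟨⟨n, c, (-1) ^ n * R₁.coeff n / e, δ, ζ, hc, hδ, hζ⟩, rfl, rfl, fun x => rfl,
    fun x => ?_⟩
  rw [← eval_upPoly]
  congr 1
  have hC : C e * C ((-1) ^ n * R₁.coeff n / e) = C ((-1) ^ n * R₁.coeff n) := by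
    rw [← C_mul, mul_div_cancel₀ _ he.ne']
  change C e * ((C c * X + C ((-1) ^ n * R₁.coeff n / e)) * Q + residueNumerator ζ δ) = R
  linear_combination (-1 : ℝ[X]) * hfac + Q * hC

def IsThetaStep (mu tau rho : ℝ) (f g : RHN) : Prop :=
  IsTheta mu tau rho (some f) (some g) ∧ g.index = f.index - 1 ∧
    (∀ x : ℝ, (x - mu) * g.fup x = rho * f.fup x - (x - mu + tau * rho) * f.fdown x) ∧
    (∀ x : ℝ, (x - mu) * g.fdown x = f.fup x - tau * f.fdown x)

variable {mu tau rho : ℝ}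

lemma isThetaStep_of_fdown_fup {g : RHN} (hnc : ¬ ∀ x, f.eval x = tau)
    (hidx : g.index = f.index - 1)
    (hdown : ∀ x, (x - mu) * g.fdown x = f.fup x - tau * f.fdown x)
    (hup : ∀ x, g.fup x = rho * g.fdown x - f.fdown x) : IsThetaStep mu tau rho f g := by
  refine ⟨⟨hnc, fun x hfx hfe hgx => ?_⟩, hidx, fun x => ?_, hdown⟩
  · have hf := f.eval_mul_fdown ((f.fdown_ne_zero_iff x).1 hfx)
    have hg := g.eval_mul_fdown ((g.fdown_ne_zero_iff x).1 hgx)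
    have h1 : (g.eval x - rho) * g.fdown x = -f.fdown x := by rw [sub_mul, hg, hup]; ring
    have h2 : (x - mu) * g.fdown x = (f.eval x - tau) * f.fdown x := by rw [hdown, ← hf]; ring
    rw [← sub_eq_iff_eq_add, eq_div_iff (sub_ne_zero.2 hfe)]
    refine mul_right_cancel₀ hfx ?_
    linear_combination (x - mu) * h1 - (g.eval x - rho) * h2
  · rw [hup]
    linear_combination rho * hdown x

lemma exists_isThetaStep_of_factorization (hnc : ¬ ∀ x, f.eval x = tau) {n : ℕ} {c : ℝ}
    (hc : 0 ≤ c) {ζ : Fin n → ℝ} (hζ : StrictMono ζ)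
    (hidx : 2 * (n : ℤ) + (if 0 < c then 1 else 0) = f.index - 1)
    (hfactor : ∀ x, f.fup x - tau * f.fdown x = (x - mu) * (normalizer c * ∏ k, (ζ k - x)))
    (hsign : ∀ k : Fin n, 0 < (-1) ^ ((k : ℕ) + 1) * f.fdown (ζ k))
    (hdeg : f.downPoly.natDegree ≤ n + 1)
    (hcoeff : f.downPoly.coeff (n + 1) = -(normalizer c * c * (-1) ^ n)) :
    ∃ g, IsThetaStep mu tau rho f g := by
  set Q : ℝ[X] := ∏ k, (C (ζ k) - X)
  have hQ : Q.natDegree = n := by simp [Q, natDegree_prod_C_sub_X]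
  set R : ℝ[X] := C (rho * normalizer c) * Q - f.downPoly
  have hR : R.natDegree ≤ n + 1 :=
    (natDegree_sub_le _ _).trans (max_le ((natDegree_C_mul_le _ _).trans (by omega)) hdeg)
  have hRn : R.coeff (n + 1) = normalizer c * c * (-1) ^ n := by
    rw [coeff_sub, coeff_C_mul, coeff_eq_zero_of_natDegree_lt (by omega), hcoeff]
    ring
  have hRsign (k : Fin n) : 0 < (-1) ^ (k : ℕ) * R.eval (ζ k) := by
    simpa [R, Q, eval_prod, prod_eq_zero (mem_univ k), eval_downPoly, pow_succ] using hsign k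
  obtain ⟨g, hd, hh0, hdown, hup⟩ := exists_fup_eq_eval hζ hc hR hRn hRsign
  refine ⟨g, isThetaStep_of_fdown_fup f hnc ?_ (fun x => ?_) (fun x => ?_)⟩
  · rw [index, hd, hh0, hidx]
  · rw [hdown, ← hfactor]
  · simp [hup, hdown, R, Q, eval_prod, eval_downPoly, mul_assoc]

lemma exists_isThetaStep_of_h0_eq_zero (hmu : ∀ k, mu < f.pole k) (htau : tau = f.eval mu)
    (hnc : ¬ ∀ x, f.eval x = tau) (h0 : f.h0 = 0) : ∃ g, IsThetaStep mu tau rho f g := by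
  obtain ⟨x, hx⟩ := not_forall.1 hnc
  obtain ⟨n, hn⟩ := Nat.exists_eq_add_one.2 (f.d_pos_of_h0_eq_zero h0 (htau ▸ hx))
  have htau_gt : f.h < tau := htau ▸ f.h_lt_eval_of_h0_eq_zero h0 (by omega) hmu
  set c := 1 / (tau - f.h)
  have hc : 0 < c := one_div_pos.2 (sub_pos.2 htau_gt)
  have hnorm : normalizer c = tau - f.h := by rw [normalizer, if_pos hc, one_div_one_div]
  set P := f.upPolySubConst tau
  have hP : P.natDegree ≤ n + 1 := by
    have : P.natDegree ≤ f.d + 1 - 1 := natDegree_le_pred (f.natDegree_upPolySubConst_le tau)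
      (by rw [coeff_upPolySubConst_succ, h0, mul_zero, zero_mul])
    omega
  have hPn : (-1) ^ n * P.coeff (n + 1) = normalizer c := by
    have hsq : ((-1 : ℝ) ^ n) ^ 2 = 1 := by rw [← pow_mul, pow_mul', neg_one_sq, one_pow]
    rw [← hn, coeff_upPolySubConst_of_h0_eq_zero f tau h0, hn, hnorm, pow_succ]
    linear_combination (tau - f.h) * hsq
  set a : Fin (n + 1) → ℝ := fun k => f.pole (Fin.cast hn.symm k)
  have ha : StrictMono a := f.pole_strictMono.comp fun _ _ h => h
  obtain ⟨ζ, hζ, hζa, hfac⟩ := eval_eq_mul_prod_of_alternating hP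
    (f.eval_upPolySubConst_eq_zero hmu htau) ha (hmu _)
    fun k => f.neg_one_pow_mul_eval_pole_pos tau (Fin.cast hn.symm k)
  refine exists_isThetaStep_of_factorization f hnc hc.le hζ ?_ (fun x => ?_) (fun k => ?_) ?_ ?_
  · simp [index, hn, h0, hc]
    ring
  · rw [← hPn, ← hfac x, eval_upPolySubConst]
  · simpa using f.neg_one_pow_mul_fdown_pos (Fin.cast hn.symm k.castSucc) (hζa k).1
      fun j hj => (hζa k).2.trans_le (ha.monotone (show k.succ ≤ Fin.cast hn j from hj))
  · rw [natDegree_downPoly, hn]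
  · have hc1 : normalizer c * c = 1 := by
      rw [hnorm]
      exact mul_one_div_cancel (sub_pos.2 htau_gt).ne'
    rw [← hn, coeff_downPoly, h0', if_neg (by rw [h0]; exact lt_irrefl 0), hn, hc1, pow_succ]
    ring

lemma exists_isThetaStep_of_h0_pos (hmu : ∀ k, mu < f.pole k) (htau : tau = f.eval mu)
    (hnc : ¬ ∀ x, f.eval x = tau) (h0 : 0 < f.h0) : ∃ g, IsThetaStep mu tau rho f g := by
  set P := f.upPolySubConst tau
  have hPn : P.coeff (f.d + 1) = (-1) ^ f.d := by
    rw [coeff_upPolySubConst_succ, h0', if_pos h0, one_div_mul_cancel h0.ne', one_mul]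
  have hPdeg : P.natDegree = f.d + 1 :=
    natDegree_eq_of_le_of_coeff_ne_zero (f.natDegree_upPolySubConst_le tau) (by simp [hPn])
  obtain ⟨M, hMsign, hMpole, hMmu⟩ := ((eventually_pos_leadingCoeff_mul_eval (p := P)
    (natDegree_pos_iff_degree_pos.1 (by omega))).and
    ((eventually_all.2 fun k => eventually_gt_atTop (f.pole k)).and
    (eventually_gt_atTop mu))).exists
  rw [leadingCoeff, hPdeg, hPn] at hMsign
  set a : Fin (f.d + 1) → ℝ := Fin.snoc f.pole M
  have hmua : mu < a 0 := by
    cases (0 : Fin (f.d + 1)) using Fin.lastCases with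
    | last => simpa [a] using hMmu
    | cast k => simpa [a] using hmu k
  have ha : StrictMono a := by
    simp only [a]
    rw [← Fin.insertNth_last']
    exact (Fin.strictMono_insertNth_iff _ _ _).2 ⟨f.pole_strictMono, fun i _ => hMpole i,
      fun i hi => absurd hi (Fin.castSucc_lt_last i).not_ge⟩
  have hsign (k : Fin (f.d + 1)) : 0 < (-1) ^ (k : ℕ) * P.eval (a k) := by
    cases k using Fin.lastCases with
    | last => simpa only [a, Fin.snoc_last, Fin.val_last] using hMsign
    | cast k => simpa only [a, Fin.snoc_castSucc, Fin.val_castSucc]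
        using f.neg_one_pow_mul_eval_pole_pos tau k
  obtain ⟨ζ, hζ, hζa, hfac⟩ := eval_eq_mul_prod_of_alternating hPdeg.le
    (f.eval_upPolySubConst_eq_zero hmu htau) ha hmua hsign
  refine exists_isThetaStep_of_factorization f hnc le_rfl hζ ?_ (fun x => ?_) (fun k => ?_) ?_ ?_
  · simp [index, h0]
  · have hPn' : (-1) ^ f.d * P.coeff (f.d + 1) = normalizer 0 := by
      rw [hPn, ← mul_pow]
      simp [normalizer]
    rw [← hPn', ← hfac x, eval_upPolySubConst]
  · simpa using f.neg_one_pow_mul_fdown_pos k (by simpa [a] using (hζa k).1) fun j hj => by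
      simpa [a] using (hζa k).2.trans_le (ha.monotone (Fin.succ_le_castSucc_iff.2 hj))
  · rw [natDegree_downPoly]
    omega
  · rw [coeff_eq_zero_of_natDegree_lt (by rw [natDegree_downPoly]; omega)]
    simp

end RHN

/-- If `μ < π̊(f)`, `τ = f(μ)` and `f ≢ τ`, then `f̂ = Θ(μ,τ,ρ,f)` is again a rational
Herglotz–Nevanlinna function, `ind f̂ = ind f − 1`, and
`(λ−μ) f̂↑(λ) = ρ f↑(λ) − (λ−μ+τρ) f↓(λ)`, `(λ−μ) f̂↓(λ) = f↑(λ) − τ f↓(λ)`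
(so both quotients are polynomials). -/
theorem theta_decreases_index
    (f : RHN) (mu tau rho : ℝ)
    (hmu : (mu : EReal) < f.mpole) (htau : tau = f.eval mu)
    (hnc : ¬ ∀ x : ℝ, f.eval x = tau) :
    ∃ g : RHN, IsTheta mu tau rho (some f) (some g) ∧
      g.index = f.index - 1 ∧
      (∀ x : ℝ, (x - mu) * g.fup x = rho * f.fup x - (x - mu + tau * rho) * f.fdown x) ∧
      (∀ x : ℝ, (x - mu) * g.fdown x = f.fup x - tau * f.fdown x) := by
  have hmu' := f.lt_pole_of_coe_lt_mpole hmu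
  rcases f.h0_nonneg.eq_or_lt with h0 | h0
  · exact f.exists_isThetaStep_of_h0_eq_zero hmu' htau hnc h0.symm
  · exact f.exists_isThetaStep_of_h0_pos hmu' htau hnc h0
end

section
/- Let f be a rational Herglotz–Nevanlinna function with μ < π̊(f), τ ≥ f(μ), ρ ∈ ℝ, and let f̂ := Θ(μ,τ,ρ,f). If both f and f̂ have at least one pole (i.e., ind f ≥ 2 and ind f̂ ≥ 2), then the poles of f and of f̂ strictly interlace: between any two consecutive poles of f lies exactly one pole of f̂ and vice versa. Moreover, π̊(f) < π̊(f̂) if τ = f(μ), and π̊(f) > π̊(f̂) if τ > f(μ). -/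
open MeasureTheory Set

/-!
Clearing denominators in `g = (μ - λ)/(f - τ) + ρ` gives the polynomial identity
`(g↑ - ρ g↓)(f↑ - τ f↓) = (μ - λ) g↓ f↓`. Evaluated at the poles of `f`, of `g`, and at the
solutions of `f = τ`, it shows that `f` and `g` have no common pole, that every pole of `g`
solves `f = τ`, and that every solution of `f = τ` other than `μ` is a pole of `g`. Since `f`
increases strictly from `-∞` to `+∞` between consecutive poles, each such gap contains exactly
one solution of `f = τ`, and interlacing follows. If `τ > f(μ)`, the interval `(μ, π̊(f))`
contains a solution as well. If `τ = f(μ)`, then `g - ρ = (μ - λ)/(f(λ) - f(μ)) < 0` below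
`π̊(f)`, whereas `g → +∞` to the left of each of its poles.
-/
open Polynomial Filter Topology

lemma eventually_ne_nhdsLT {α : Type*} [TopologicalSpace α] [Preorder α] [T1Space α]
    (z a : α) : ∀ᶠ x in 𝓝[<] z, x ≠ a := by
  rcases eq_or_ne z a with rfl | h
  · exact eventually_nhdsWithin_of_forall fun x hx => ne_of_lt hx
  · exact eventually_ne_nhdsWithin h

lemma tendsto_div_sub_nhdsLT {c : ℝ} (hc : 0 < c) (p : ℝ) :
    Tendsto (fun x => c / (p - x)) (𝓝[<] p) atTop := by
  have h : Tendsto (fun x => p - x) (𝓝[<] p) (𝓝[>] 0) :=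
    tendsto_nhdsWithin_iff.2
      ⟨by simpa using ((continuous_sub_left p).tendsto p).mono_left nhdsWithin_le_nhds,
        eventually_nhdsWithin_of_forall fun x hx => mem_Ioi.2 (sub_pos.2 hx)⟩
  simpa only [div_eq_mul_inv, Function.comp_def] using
    (tendsto_inv_nhdsGT_zero.comp h).const_mul_atTop hc

lemma tendsto_div_sub_nhdsGT {c : ℝ} (hc : 0 < c) (p : ℝ) :
    Tendsto (fun x => c / (p - x)) (𝓝[>] p) atBot := by
  have h : Tendsto (fun x => p - x) (𝓝[>] p) (𝓝[<] 0) :=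
    tendsto_nhdsWithin_iff.2
      ⟨by simpa using ((continuous_sub_left p).tendsto p).mono_left nhdsWithin_le_nhds,
        eventually_nhdsWithin_of_forall fun x hx => mem_Iio.2 (sub_neg.2 hx)⟩
  simpa only [div_eq_mul_inv, Function.comp_def] using
    (tendsto_inv_nhdsLT_zero.comp h).const_mul_atBot hc

lemma existsUnique_of_exists_of_not_lt {ι : Type*} [LinearOrder ι] {P : ι → Prop}
    (hex : ∃ i, P i) (hlt : ∀ i j, P i → P j → ¬ i < j) : ∃! i, P i := by
  obtain ⟨i, hi⟩ := hex
  refine ⟨i, hi, fun j hj => ?_⟩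
  rcases lt_trichotomy j i with h | h | h
  · exact absurd h (hlt j i hj hi)
  · exact h
  · exact absurd h (hlt i j hi hj)

lemma StrictMono.notMem_Ioo_succ {α : Type*} [Preorder α] {n : ℕ} {p : Fin n → α}
    (hp : StrictMono p) {k : ℕ} (hk : k + 1 < n) (m : Fin n) :
    p m ∉ Ioo (p ⟨k, Nat.lt_of_succ_lt hk⟩) (p ⟨k + 1, hk⟩) := fun hm => by
  have h₁ : k < m := hp.lt_iff_lt.1 hm.1
  have h₂ : (m : ℕ) < k + 1 := hp.lt_iff_lt.1 hm.2
  omega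

namespace RHN

variable (f : RHN)

lemma mpole_eq_pole_zero (hd : 0 < f.d) : f.mpole = f.pole ⟨0, hd⟩ := dif_pos hd

lemma pole_zero_le (hd : 0 < f.d) (k : Fin f.d) : f.pole ⟨0, hd⟩ ≤ f.pole k :=
  f.pole_strictMono.monotone (Fin.mk_le_of_le_val (Nat.zero_le _))

lemma mpole_le_pole (k : Fin f.d) : f.mpole ≤ f.pole k := by
  rw [f.mpole_eq_pole_zero (Fin.pos k), EReal.coe_le_coe_iff]
  exact f.pole_zero_le _ k

lemma coe_lt_mpole_iff {x : ℝ} : (x : EReal) < f.mpole ↔ ∀ k, x < f.pole k := by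
  by_cases hd : 0 < f.d
  · rw [f.mpole_eq_pole_zero hd, EReal.coe_lt_coe_iff]
    exact ⟨fun h k => h.trans_le (f.pole_zero_le hd k), fun h => h _⟩
  · simp only [mpole, dif_neg hd, EReal.coe_lt_top, true_iff]
    exact fun k => absurd (Fin.pos k) hd

lemma fdown_ne_zero {x : ℝ} (hx : ∀ k, f.pole k ≠ x) : f.fdown x ≠ 0 := by
  refine mul_ne_zero ?_ (Finset.prod_ne_zero_iff.2 fun k _ => sub_ne_zero.2 (hx k))
  unfold h0'
  split_ifs with h
  · exact (one_div_pos.2 h).ne'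
  · exact one_ne_zero

lemma continuousAt_add_sum_div {s : Finset (Fin f.d)} {x : ℝ} (hx : ∀ k ∈ s, f.pole k ≠ x) :
    ContinuousAt (fun y => f.h0 * y + f.h + ∑ k ∈ s, f.delta k / (f.pole k - y)) x :=
  ((continuousAt_const.mul continuousAt_id).add continuousAt_const).add <|
    tendsto_finsetSum _ fun k hk =>
      continuousAt_const.div (continuousAt_const.sub continuousAt_id) (sub_ne_zero.2 (hx k hk))

lemma continuousAt_eval {x : ℝ} (hx : ∀ k, f.pole k ≠ x) : ContinuousAt f.eval x :=
  f.continuousAt_add_sum_div fun k _ => hx k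

lemma eval_eq_div_add (k : Fin f.d) (x : ℝ) :
    f.eval x = f.delta k / (f.pole k - x)
      + (f.h0 * x + f.h + ∑ j ∈ Finset.univ.erase k, f.delta j / (f.pole j - x)) := by
  rw [eval, ← Finset.add_sum_erase _ _ (Finset.mem_univ k)]
  ring

lemma tendsto_add_sum_erase_div (k : Fin f.d) :
    Tendsto (fun y => f.h0 * y + f.h + ∑ j ∈ Finset.univ.erase k, f.delta j / (f.pole j - y))
      (𝓝 (f.pole k))
      (𝓝 (f.h0 * f.pole k + f.h +
        ∑ j ∈ Finset.univ.erase k, f.delta j / (f.pole j - f.pole k))) :=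
  f.continuousAt_add_sum_div fun _ hj =>
    f.pole_strictMono.injective.ne (Finset.ne_of_mem_erase hj)

lemma tendsto_eval_nhdsLT_pole (k : Fin f.d) : Tendsto f.eval (𝓝[<] f.pole k) atTop :=
  ((tendsto_div_sub_nhdsLT (f.delta_pos k) _).atTop_add
    ((f.tendsto_add_sum_erase_div k).mono_left nhdsWithin_le_nhds)).congr
    fun x => (f.eval_eq_div_add k x).symm

lemma tendsto_eval_nhdsGT_pole (k : Fin f.d) : Tendsto f.eval (𝓝[>] f.pole k) atBot :=
  ((tendsto_div_sub_nhdsGT (f.delta_pos k) _).atBot_add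
    ((f.tendsto_add_sum_erase_div k).mono_left nhdsWithin_le_nhds)).congr
    fun x => (f.eval_eq_div_add k x).symm

lemma strictMonoOn_eval (hd : 0 < f.d) {s : Set ℝ} (hs : s.OrdConnected)
    (hp : ∀ k, f.pole k ∉ s) : StrictMonoOn f.eval s := by
  intro a ha b hb hab
  have hterm : ∀ k, f.delta k / (f.pole k - a) < f.delta k / (f.pole k - b) := by
    intro k
    have hk : f.pole k < a ∨ b < f.pole k := by
      by_contra! h
      exact hp k (hs.out ha hb ⟨h.1, h.2⟩)
    have hprod : 0 < (f.pole k - a) * (f.pole k - b) := by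
      rcases hk with hk | hk
      · exact mul_pos_of_neg_of_neg (by linarith) (by linarith)
      · exact mul_pos (by linarith) (by linarith)
    have hdiff : f.delta k / (f.pole k - a) - f.delta k / (f.pole k - b)
        = f.delta k * (a - b) / ((f.pole k - a) * (f.pole k - b)) := by
      field_simp [left_ne_zero_of_mul hprod.ne', right_ne_zero_of_mul hprod.ne']
      ring
    have : f.delta k * (a - b) / ((f.pole k - a) * (f.pole k - b)) < 0 :=
      div_neg_of_neg_of_pos (mul_neg_of_pos_of_neg (f.delta_pos k) (by linarith)) hprod
    linarith
  have : Nonempty (Fin f.d) := ⟨⟨0, hd⟩⟩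
  have hsum := Finset.sum_lt_sum_of_nonempty Finset.univ_nonempty fun k _ => hterm k
  have hlin : f.h0 * a ≤ f.h0 * b := mul_le_mul_of_nonneg_left hab.le f.h0_nonneg
  simp only [eval]
  linarith

lemma exists_pole_mem_Icc_of_eval_eq (hd : 0 < f.d) {a b : ℝ} (hab : a < b)
    (h : f.eval a = f.eval b) : ∃ k, f.pole k ∈ Icc a b := by
  by_contra! hp
  exact (f.strictMonoOn_eval hd ordConnected_Icc hp (left_mem_Icc.2 hab.le)
    (right_mem_Icc.2 hab.le) hab).ne h

lemma exists_eval_eq_of_lt_pole (tau : ℝ) {x : ℝ} {l : Fin f.d} (hxl : x < f.pole l)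
    (hp : ∀ k, f.pole k ∉ Ico x (f.pole l)) (hfx : f.eval x < tau) :
    ∃ z ∈ Ioo x (f.pole l), f.eval z = tau := by
  obtain ⟨y, hy, hfy⟩ : ∃ y, y ∈ Ioo x (f.pole l) ∧ tau < f.eval y :=
    ((eventually_mem_set.2 (Ioo_mem_nhdsLT hxl)).and
      ((f.tendsto_eval_nhdsLT_pole l).eventually_gt_atTop tau)).exists
  have hcont : ContinuousOn f.eval (Icc x y) := fun z hz =>
    (f.continuousAt_eval fun k hk =>
      hp k ⟨hk ▸ hz.1, hk ▸ hz.2.trans_lt hy.2⟩).continuousWithinAt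
  obtain ⟨z, hz, hfz⟩ := intermediate_value_Ioo hy.1.le hcont ⟨hfx, hfy⟩
  exact ⟨z, ⟨hz.1, hz.2.trans hy.2⟩, hfz⟩

lemma exists_eval_eq_of_lt (tau : ℝ) {k l : Fin f.d} (hkl : k < l) :
    ∃ z ∈ Ioo (f.pole k) (f.pole l), (∀ m, f.pole m ≠ z) ∧ f.eval z = tau := by
  have hk : (k : ℕ) + 1 < f.d := by omega
  set k' : Fin f.d := ⟨k + 1, hk⟩
  have hkk' : k < k' := Fin.lt_def.2 (Nat.lt_succ_self _)
  have hgap := f.pole_strictMono.notMem_Ioo_succ hk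
  obtain ⟨x, hx, hfx⟩ : ∃ x, x ∈ Ioo (f.pole k) (f.pole k') ∧ f.eval x < tau :=
    ((eventually_mem_set.2 (Ioo_mem_nhdsGT (f.pole_strictMono hkk'))).and
      ((f.tendsto_eval_nhdsGT_pole k).eventually_lt_atBot tau)).exists
  obtain ⟨z, hz, hfz⟩ := f.exists_eval_eq_of_lt_pole tau hx.2
    (fun m hm => hgap m ⟨hx.1.trans_le hm.1, hm.2⟩) hfx
  refine ⟨z, ⟨hx.1.trans hz.1, hz.2.trans_le ?_⟩, fun m hm => hgap m ?_, hfz⟩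
  · exact f.pole_strictMono.monotone (Fin.mk_le_of_le_val (Nat.succ_le_of_lt hkl))
  · exact hm ▸ ⟨hx.1.trans hz.1, hz.2⟩

-- `f↓ = h₀′ · den` and `f↑ = h₀′ · num`.
noncomputable def den : ℝ[X] := ∏ k, (C (f.pole k) - X)

noncomputable def num : ℝ[X] :=
  (C f.h0 * X + C f.h) * f.den
    + ∑ k, C (f.delta k) * ∏ j ∈ Finset.univ.erase k, (C (f.pole j) - X)

lemma eval_den_eq_zero_iff {x : ℝ} : f.den.eval x = 0 ↔ ∃ k, f.pole k = x := by
  simp [den, eval_prod, Finset.prod_eq_zero_iff, sub_eq_zero]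

lemma eval_num {x : ℝ} (hx : ∀ k, f.pole k ≠ x) : f.num.eval x = f.eval x * f.den.eval x := by
  simp only [num, den, eval, eval_add, eval_mul, eval_finsetSum, eval_prod, eval_sub, eval_C,
    eval_X, add_mul, Finset.sum_mul]
  congr 1
  refine Finset.sum_congr rfl fun k _ => ?_
  rw [← Finset.mul_prod_erase Finset.univ _ (Finset.mem_univ k)]
  field_simp [sub_ne_zero.2 (hx k)]

lemma eval_num_pole_ne_zero (k : Fin f.d) : f.num.eval (f.pole k) ≠ 0 := by
  have hvanish : ∀ j ≠ k, ∏ i ∈ Finset.univ.erase j, (f.pole i - f.pole k) = 0 := fun j hj =>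
    Finset.prod_eq_zero (Finset.mem_erase.2 ⟨hj.symm, Finset.mem_univ k⟩) (sub_self _)
  have hk : ∏ j, (f.pole j - f.pole k) = 0 := Finset.prod_eq_zero (Finset.mem_univ k) (sub_self _)
  simp only [num, den, eval_add, eval_mul, eval_finsetSum, eval_prod, eval_sub, eval_C, eval_X, hk,
    mul_zero, zero_add]
  rw [Finset.sum_eq_single k (fun j _ hj => by rw [hvanish j hj, mul_zero]) (by simp)]
  exact mul_ne_zero (f.delta_pos k).ne' <| Finset.prod_ne_zero_iff.2 fun j hj =>
    sub_ne_zero.2 (f.pole_strictMono.injective.ne (Finset.ne_of_mem_erase hj))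

end RHN

namespace IsTheta

variable {f g : RHN} {mu tau rho : ℝ}

lemma eval_eq (hg : IsTheta mu tau rho (some f) (some g)) {x : ℝ} (hfp : ∀ k, f.pole k ≠ x)
    (hfx : f.eval x ≠ tau) (hgp : ∀ j, g.pole j ≠ x) :
    g.eval x = (mu - x) / (f.eval x - tau) + rho :=
  hg.2 x (f.fdown_ne_zero hfp) hfx (g.fdown_ne_zero hgp)

lemma num_sub_mul_den_ne_zero (hg : IsTheta mu tau rho (some f) (some g)) :
    f.num - C tau * f.den ≠ 0 := by
  obtain ⟨x, hx⟩ := not_forall.1 hg.1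
  intro h
  have hx0 := congrArg (eval x) h
  simp only [eval_sub, eval_mul, eval_C, eval_zero] at hx0
  by_cases hp : ∀ k, f.pole k ≠ x
  · rw [f.eval_num hp, ← sub_mul] at hx0
    exact mul_ne_zero (sub_ne_zero.2 hx) (mt f.eval_den_eq_zero_iff.1 (not_exists.2 hp)) hx0
  · obtain ⟨k, rfl⟩ := not_forall_not.1 hp
    rw [f.eval_den_eq_zero_iff.2 ⟨k, rfl⟩, mul_zero, sub_zero] at hx0
    exact f.eval_num_pole_ne_zero k hx0

lemma num_sub_mul_num_sub (hg : IsTheta mu tau rho (some f) (some g)) :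
    (g.num - C rho * g.den) * (f.num - C tau * f.den) = (C mu - X) * g.den * f.den := by
  apply eq_of_infinite_eval_eq
  have hbad : (range f.pole ∪ range g.pole ∪ {x | (f.num - C tau * f.den).IsRoot x}).Finite :=
    ((finite_range _).union (finite_range _)).union
      (finite_setOfPred_isRoot hg.num_sub_mul_den_ne_zero)
  refine hbad.infinite_compl.mono fun x hx => ?_
  simp only [mem_compl_iff, mem_union, mem_range, mem_ofPred_eq, IsRoot, not_or,
    not_exists] at hx
  obtain ⟨⟨hfp, hgp⟩, hroot⟩ := hx
  simp only [eval_sub, eval_mul, eval_C, f.eval_num hfp] at hroot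
  have hfx : f.eval x ≠ tau := fun h => hroot (by rw [h, sub_self])
  simp only [mem_ofPred_eq, eval_mul, eval_sub, eval_C, eval_X, f.eval_num hfp, g.eval_num hgp,
    hg.eval_eq hfp hfx hgp]
  field_simp [sub_ne_zero.2 hfx]
  ring

lemma pole_ne_pole (hg : IsTheta mu tau rho (some f) (some g)) (k : Fin f.d) (j : Fin g.d) :
    f.pole k ≠ g.pole j := by
  intro he
  have h := congrArg (eval (f.pole k)) hg.num_sub_mul_num_sub
  simp only [eval_mul, eval_sub, eval_C, f.eval_den_eq_zero_iff.2 ⟨k, rfl⟩,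
    g.eval_den_eq_zero_iff.2 ⟨j, he.symm⟩, mul_zero, sub_zero] at h
  rw [he] at h
  exact mul_ne_zero (g.eval_num_pole_ne_zero j) (he ▸ f.eval_num_pole_ne_zero k) h

lemma eval_pole_eq (hg : IsTheta mu tau rho (some f) (some g)) (j : Fin g.d) :
    f.eval (g.pole j) = tau := by
  have hf : ∀ k, f.pole k ≠ g.pole j := fun k => hg.pole_ne_pole k j
  have h := congrArg (eval (g.pole j)) hg.num_sub_mul_num_sub
  simp only [eval_mul, eval_sub, eval_C, g.eval_den_eq_zero_iff.2 ⟨j, rfl⟩, mul_zero,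
    sub_zero, zero_mul, f.eval_num hf, ← sub_mul] at h
  have hden : f.den.eval (g.pole j) ≠ 0 := mt f.eval_den_eq_zero_iff.1 (not_exists.2 hf)
  exact sub_eq_zero.1 ((mul_eq_zero.1 ((mul_eq_zero.1 h).resolve_left
    (g.eval_num_pole_ne_zero j))).resolve_right hden)

lemma exists_pole_eq (hg : IsTheta mu tau rho (some f) (some g)) {z : ℝ}
    (hf : ∀ k, f.pole k ≠ z) (hfz : f.eval z = tau) (hz : z ≠ mu) : ∃ j, g.pole j = z := by
  have h := congrArg (eval z) hg.num_sub_mul_num_sub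
  simp only [eval_mul, eval_sub, eval_C, eval_X, f.eval_num hf, hfz, sub_self,
    mul_zero] at h
  have hden : f.den.eval z ≠ 0 := mt f.eval_den_eq_zero_iff.1 (not_exists.2 hf)
  refine g.eval_den_eq_zero_iff.1 ?_
  exact (mul_eq_zero.1 ((mul_eq_zero.1 h.symm).resolve_right hden)).resolve_left
    (sub_ne_zero.2 hz.symm)

lemma existsUnique_pole_mem_Ioo_source_poles (hg : IsTheta mu tau rho (some f) (some g))
    (hmu : ∀ k, mu < f.pole k) {k : ℕ} (hk : k + 1 < f.d) :
    ∃! j : Fin g.d, g.pole j ∈ Ioo (f.pole ⟨k, Nat.lt_of_succ_lt hk⟩) (f.pole ⟨k + 1, hk⟩) := by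
  refine existsUnique_of_exists_of_not_lt ?_ fun i j hi hj hij => ?_
  · obtain ⟨z, hz, hf, hfz⟩ := f.exists_eval_eq_of_lt tau (Fin.mk_lt_mk.2 (Nat.lt_succ_self k))
    obtain ⟨j, rfl⟩ := hg.exists_pole_eq hf hfz ((hmu _).trans hz.1).ne'
    exact ⟨j, hz⟩
  · obtain ⟨m, hm⟩ := f.exists_pole_mem_Icc_of_eval_eq (by omega) (g.pole_strictMono hij)
      ((hg.eval_pole_eq i).trans (hg.eval_pole_eq j).symm)
    exact f.pole_strictMono.notMem_Ioo_succ hk m ⟨hi.1.trans_le hm.1, hm.2.trans_lt hj.2⟩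

lemma existsUnique_source_pole_mem_Ioo_poles (hg : IsTheta mu tau rho (some f) (some g))
    (hmu : ∀ k, mu < f.pole k) (hd : 0 < f.d) {k : ℕ} (hk : k + 1 < g.d) :
    ∃! m : Fin f.d, f.pole m ∈ Ioo (g.pole ⟨k, Nat.lt_of_succ_lt hk⟩) (g.pole ⟨k + 1, hk⟩) := by
  refine existsUnique_of_exists_of_not_lt ?_ fun u v hu hv huv => ?_
  · obtain ⟨m, hm⟩ := f.exists_pole_mem_Icc_of_eval_eq hd
      (g.pole_strictMono (Fin.mk_lt_mk.2 (Nat.lt_succ_self k)))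
      ((hg.eval_pole_eq _).trans (hg.eval_pole_eq _).symm)
    exact ⟨m, hm.1.lt_of_ne (hg.pole_ne_pole m _).symm, hm.2.lt_of_ne (hg.pole_ne_pole m _)⟩
  · obtain ⟨z, hz, hf, hfz⟩ := f.exists_eval_eq_of_lt tau huv
    obtain ⟨j, rfl⟩ := hg.exists_pole_eq hf hfz ((hmu u).trans hz.1).ne'
    exact g.pole_strictMono.notMem_Ioo_succ hk j ⟨hu.1.trans hz.1, hz.2.trans hv.2⟩

lemma eval_lt_of_eval_eq (hg : IsTheta mu tau rho (some f) (some g))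
    (hmu : ∀ k, mu < f.pole k) (hd : 0 < f.d) (htau : f.eval mu = tau) {x : ℝ}
    (hxf : ∀ k, x < f.pole k) (hxmu : x ≠ mu) (hxg : ∀ j, g.pole j ≠ x) : g.eval x < rho := by
  set s := ⋂ k, Iio (f.pole k)
  have hmono : StrictMonoOn f.eval s := f.strictMonoOn_eval hd
    (ordConnected_iInter fun _ => ordConnected_Iio)
    fun k hk => lt_irrefl _ (mem_Iio.1 (mem_iInter.1 hk k))
  have hxs : x ∈ s := mem_iInter.2 hxf
  have hmus : mu ∈ s := mem_iInter.2 hmu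
  have hquot : (mu - x) / (f.eval x - tau) < 0 := by
    subst htau
    rcases hxmu.lt_or_gt with h | h
    · exact div_neg_of_pos_of_neg (sub_pos.2 h) (sub_neg.2 (hmono hxs hmus h))
    · exact div_neg_of_neg_of_pos (sub_neg.2 h) (sub_pos.2 (hmono hmus hxs h))
  rw [hg.eval_eq (fun k => (hxf k).ne') (htau ▸ hmono.injOn.ne hxs hmus hxmu) hxg]
  linarith

lemma mpole_lt_mpole_of_eval_eq (hg : IsTheta mu tau rho (some f) (some g))
    (hmu : ∀ k, mu < f.pole k) (hd : 0 < f.d) (htau : f.eval mu = tau) :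
    f.mpole < g.mpole := by
  rw [f.mpole_eq_pole_zero hd, g.coe_lt_mpole_iff]
  intro j
  obtain ⟨k, hk⟩ : ∃ k, f.pole k ≤ g.pole j := by
    by_contra! hj
    have hbelow : ∀ᶠ x in 𝓝[<] g.pole j, g.eval x < rho := by
      filter_upwards [self_mem_nhdsWithin, eventually_ne_nhdsLT _ mu,
        eventually_all.2 fun i => eventually_ne_nhdsLT (g.pole j) (g.pole i)]
        with x hxj hxmu hxg
      exact hg.eval_lt_of_eval_eq hmu hd htau (fun k => hxj.trans (hj k)) hxmu
        fun i => (hxg i).symm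
    obtain ⟨x, hlt, hgt⟩ :=
      (hbelow.and ((g.tendsto_eval_nhdsLT_pole j).eventually_gt_atTop rho)).exists
    exact lt_asymm hlt hgt
  exact (f.pole_zero_le hd k).trans_lt (hk.lt_of_ne (hg.pole_ne_pole k j))

lemma mpole_lt_mpole_of_eval_lt (hg : IsTheta mu tau rho (some f) (some g))
    (hmu : ∀ k, mu < f.pole k) (hd : 0 < f.d) (htau : f.eval mu < tau) :
    g.mpole < f.mpole := by
  obtain ⟨z, hz, hfz⟩ := f.exists_eval_eq_of_lt_pole tau (hmu ⟨0, hd⟩)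
    (fun k hk => hk.2.not_ge (f.pole_zero_le hd k)) htau
  have hzf : ∀ k, z < f.pole k := fun k => hz.2.trans_le (f.pole_zero_le hd k)
  obtain ⟨j, rfl⟩ := hg.exists_pole_eq (fun k => (hzf k).ne') hfz hz.1.ne'
  exact (g.mpole_le_pole j).trans_lt (f.coe_lt_mpole_iff.2 hzf)

end IsTheta

theorem theta_poles_interlace_general
    (f g : RHN) (mu tau rho : ℝ)
    (hmu : (mu : EReal) < f.mpole)
    (hg : IsTheta mu tau rho (some f) (some g))
    (hfd : 1 ≤ f.d) :
    (∀ (k : Fin f.d) (j : Fin g.d), f.pole k ≠ g.pole j) ∧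
    (∀ (k : ℕ) (hk : k + 1 < f.d),
      ∃! j : Fin g.d,
        g.pole j ∈ Set.Ioo (f.pole ⟨k, Nat.lt_of_succ_lt hk⟩) (f.pole ⟨k + 1, hk⟩)) ∧
    (∀ (k : ℕ) (hk : k + 1 < g.d),
      ∃! j : Fin f.d,
        f.pole j ∈ Set.Ioo (g.pole ⟨k, Nat.lt_of_succ_lt hk⟩) (g.pole ⟨k + 1, hk⟩)) ∧
    (tau = f.eval mu → f.mpole < g.mpole) ∧
    (f.eval mu < tau → g.mpole < f.mpole) := by
  have hmu' := f.coe_lt_mpole_iff.1 hmu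
  exact ⟨hg.pole_ne_pole, fun _ hk => hg.existsUnique_pole_mem_Ioo_source_poles hmu' hk,
    fun _ hk => hg.existsUnique_source_pole_mem_Ioo_poles hmu' hfd hk,
    fun htau => hg.mpole_lt_mpole_of_eval_eq hmu' hfd htau.symm,
    hg.mpole_lt_mpole_of_eval_lt hmu' hfd⟩

/-- If `μ < π̊(f)`, `τ ≥ f(μ)`, `g = Θ(μ,τ,ρ,f)`, and both `f` and `g` have at least one
pole, then the poles of `f` and `g` strictly interlace (between any two consecutive poles
of one function lies exactly one pole of the other, and no poles coincide); moreover
`π̊(f) < π̊(g)` if `τ = f(μ)` and `π̊(f) > π̊(g)` if `τ > f(μ)`. -/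
theorem theta_poles_interlace
    (f g : RHN) (mu tau rho : ℝ)
    (hmu : (mu : EReal) < f.mpole) (htau : f.eval mu ≤ tau)
    (hg : IsTheta mu tau rho (some f) (some g))
    (hfd : 1 ≤ f.d) (hgd : 1 ≤ g.d) :
    (∀ (k : Fin f.d) (j : Fin g.d), f.pole k ≠ g.pole j) ∧
    (∀ (k : ℕ) (hk : k + 1 < f.d),
      ∃! j : Fin g.d,
        g.pole j ∈ Set.Ioo (f.pole ⟨k, Nat.lt_of_succ_lt hk⟩) (f.pole ⟨k + 1, hk⟩)) ∧
    (∀ (k : ℕ) (hk : k + 1 < g.d),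
      ∃! j : Fin f.d,
        f.pole j ∈ Set.Ioo (g.pole ⟨k, Nat.lt_of_succ_lt hk⟩) (g.pole ⟨k + 1, hk⟩)) ∧
    (tau = f.eval mu → f.mpole < g.mpole) ∧
    (f.eval mu < tau → g.mpole < f.mpole) :=
  theta_poles_interlace_general f g mu tau rho hmu hg hfd
end
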